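/- For every 2×2 density matrix ρ there exists a real operation mapping the maximal imaginary state to ρ; that is, there exist finitely many 2×2 complex matrices K₁,…,K_N with all real entries such that Σₘ Kₘ†Kₘ = I and ρ = Σₘ Kₘ · M₊ · Kₘ†, where M₊ = (1/2)[[1, −i],[i, 1]] is the density matrix of |+⟩ = (|0⟩ + i|1⟩)/√2. -/

import Mathlib

open Matrix Kronecker BigOperators
open scoped ComplexOrder

noncomputable section

/-- A density matrix: positive semidefinite with trace 1. -/
def IsDensityMatrix {n : Type*} [Fintype n] [DecidableEq n] (ρ : Matrix n n ℂ) : Prop :=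
  ρ.PosSemidef ∧ ρ.trace = 1

/-- The l₁-norm imaginarity measure: sum of |Im ρᵢⱼ| over off-diagonal entries. -/
noncomputable def Fl1 {n : Type*} [Fintype n] [DecidableEq n] (ρ : Matrix n n ℂ) : ℝ :=
  ∑ i, ∑ j, if i = j then 0 else |(ρ i j).im|

/-- The trace norm ‖M‖₁ = Tr √(M†M). -/
noncomputable def traceNorm {n : Type*} [Fintype n] [DecidableEq n] (M : Matrix n n ℂ) : ℝ :=
  (((Matrix.posSemidef_conjTranspose_mul_self M).1.eigenvectorUnitary.1 *
    diagonal (fun i => (((√·) ∘ (Matrix.posSemidef_conjTranspose_mul_self M).1.eigenvalues) i : ℂ)) *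
    (star (Matrix.posSemidef_conjTranspose_mul_self M).1.eigenvectorUnitary : Matrix n n ℂ)).trace).re

/-- The robustness of imaginarity: (1/2)‖ρ − ρᵀ‖₁. -/
noncomputable def FR {n : Type*} [Fintype n] [DecidableEq n] (ρ : Matrix n n ℂ) : ℝ :=
  traceNorm (ρ - ρᵀ) / 2

/-- Von Neumann entropy (base-2), via eigenvalues of a Hermitian matrix
(junk value 0 if not Hermitian). -/
noncomputable def vnEntropy {n : Type*} [Fintype n] [DecidableEq n] (σ : Matrix n n ℂ) : ℝ :=
  if h : σ.IsHermitian then -∑ j, (h.eigenvalues j) * Real.logb 2 (h.eigenvalues j) else 0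

/-- The relative entropy of imaginarity: S(Re ρ) − S(ρ), Re ρ = (ρ + ρᵀ)/2. -/
noncomputable def Fr {n : Type*} [Fintype n] [DecidableEq n] (ρ : Matrix n n ℂ) : ℝ :=
  vnEntropy ((1/2 : ℂ) • (ρ + ρᵀ)) - vnEntropy ρ

/-- The canonical single-qubit state ρ_A. -/
noncomputable def rhoA (A : ℝ) : Matrix (Fin 2) (Fin 2) ℂ :=
  !![(((1 + A) / 2 : ℝ) : ℂ), -(Complex.I / 2) * (Real.sqrt (1 - A ^ 2) : ℂ);
     (Complex.I / 2) * (Real.sqrt (1 - A ^ 2) : ℂ), (((1 - A) / 2 : ℝ) : ℂ)]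

/-- Density matrix of the maximal imaginary state |+⟩ = (|0⟩ + i|1⟩)/√2. -/
noncomputable def Mplus : Matrix (Fin 2) (Fin 2) ℂ :=
  (1/2 : ℂ) • !![1, -Complex.I; Complex.I, 1]

/-!
A density matrix decomposes as `ρ = ∑ₖ vₖ vₖᴴ` with `∑ₖ ‖vₖ‖² = tr ρ = 1`. A real matrix `K`
sends `|+⟩ = (e₀ + i e₁)/√2` to `(K e₀ + i K e₁)/√2`, so every complex vector is reachable from
`|+⟩` by real maps: each rank-one term `vₖ vₖᴴ` is the image of `M₊` under two real Kraus operators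
whose completeness defect is exactly `‖vₖ‖² • 1`, and summing over `k` gives a real operation.
-/

/-- For `w = a + i c` with `a c` real, the matrices with columns `(a, c)` and `(c, -a)`; they send
`|+⟩` to `w / √2` and `-i w / √2`. -/
def realKraus {n : Type*} (w : n → ℂ) : Fin 2 → Matrix n (Fin 2) ℂ :=
  ![Matrix.of fun i => ![((w i).re : ℂ), ((w i).im : ℂ)],
    Matrix.of fun i => ![((w i).im : ℂ), -((w i).re : ℂ)]]

section realKraus

variable {n : Type*} (w : n → ℂ)

lemma im_realKraus_apply (b : Fin 2) (i : n) (j : Fin 2) : (realKraus w b i j).im = 0 := by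
  fin_cases b <;> fin_cases j <;> simp [realKraus]

lemma sum_realKraus_mul_Mplus_mul_conjTranspose :
    ∑ b, realKraus w b * Mplus * (realKraus w b)ᴴ = vecMulVec w (star w) := by
  ext i l
  apply Complex.ext <;>
    simp [realKraus, Mplus, Matrix.mul_apply, Fin.sum_univ_two, vecMulVec_apply] <;> ring

variable [Fintype n]

lemma sum_conjTranspose_realKraus_mul_self :
    ∑ b, (realKraus w b)ᴴ * realKraus w b = (w ⬝ᵥ star w) • (1 : Matrix (Fin 2) (Fin 2) ℂ) := by
  ext j k
  fin_cases j <;> fin_cases k <;>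
    simp [realKraus, Matrix.mul_apply, Fin.sum_univ_two, dotProduct, ← Finset.sum_add_distrib,
      Complex.mul_conj, Complex.normSq_apply, mul_comm, add_comm]

end realKraus

/-- every 2×2 density matrix is the image of the maximal imaginary state
under a real operation. -/
theorem exists_real_operation_from_maximal_imaginary
    (ρ : Matrix (Fin 2) (Fin 2) ℂ) (hρ : IsDensityMatrix ρ) :
    ∃ (N : ℕ) (K : Fin N → Matrix (Fin 2) (Fin 2) ℂ),
      (∀ m i j, (K m i j).im = 0) ∧
      ((∑ m, (K m)ᴴ * K m) = 1) ∧
      ρ = ∑ m, K m * Mplus * (K m)ᴴ := by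
  obtain ⟨hpsd, htrace⟩ := hρ
  obtain ⟨m, v, rfl⟩ := Matrix.posSemidef_iff_eq_sum_vecMulVec.mp hpsd
  simp only [trace_sum, trace_vecMulVec] at htrace
  let K : Fin m × Fin 2 → Matrix (Fin 2) (Fin 2) ℂ := fun p ↦ realKraus (v p.1) p.2
  let e := Fintype.equivFin (Fin m × Fin 2)
  refine ⟨_, K ∘ e.symm, fun j ↦ im_realKraus_apply _ _, ?_, ?_⟩
  · calc ∑ j, (K (e.symm j))ᴴ * K (e.symm j)
        = ∑ k, ∑ b, (realKraus (v k) b)ᴴ * realKraus (v k) b := by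
          rw [e.symm.sum_comp fun p ↦ (K p)ᴴ * K p, Fintype.sum_prod_type]
      _ = 1 := by
          simp_rw [sum_conjTranspose_realKraus_mul_self, ← Finset.sum_smul, htrace, one_smul]
  · calc ∑ k, vecMulVec (v k) (star (v k))
        = ∑ k, ∑ b, realKraus (v k) b * Mplus * (realKraus (v k) b)ᴴ := by
          simp_rw [sum_realKraus_mul_Mplus_mul_conjTranspose]
      _ = ∑ j, K (e.symm j) * Mplus * (K (e.symm j))ᴴ := by
          rw [e.symm.sum_comp fun p ↦ K p * Mplus * (K p)ᴴ, Fintype.sum_prod_type]
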